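/- If f : \mathbb{R}^+ \to \mathbb{R}^+ is ultrametric preserving and subadditive, then f is metric preserving. -/

import Mathlib

def IsMetric {X : Type*} (d : X → X → ℝ) : Prop :=
  (∀ x y, d x y = 0 ↔ x = y) ∧ (∀ x y, d x y = d y x) ∧
  (∀ x y z, d x y ≤ d x z + d z y)

def IsUltrametric {X : Type*} (d : X → X → ℝ) : Prop :=
  IsMetric d ∧ ∀ x y z, d x y ≤ max (d x z) (d z y)

def Amenable (f : ℝ → ℝ) : Prop := f 0 = 0 ∧ ∀ x > 0, f x > 0

def MetricPreserving (f : ℝ → ℝ) : Prop :=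
  ∀ (X : Type) (d : X → X → ℝ), IsMetric d → IsMetric (fun x y => f (d x y))

def UltrametricPreserving (f : ℝ → ℝ) : Prop :=
  ∀ (X : Type) (d : X → X → ℝ), IsUltrametric d → IsUltrametric (fun x y => f (d x y))

def TriangleTriplet (a b c : ℝ) : Prop := a ≤ b + c ∧ b ≤ a + c ∧ c ≤ a + b

def StrongTriangleTriplet (a b c : ℝ) : Prop :=
  a ≤ max b c ∧ b ≤ max a c ∧ c ≤ max a b

/-!
An ultrametric preserving `f` is tested on the isosceles three-point ultrametric space with
sides `a`, `b`, `b` (`0 < a ≤ b`): it must send `0` to `0` and positive numbers to positive numbers, and the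
strong triangle inequality there gives `f a ≤ max (f b) (f b) = f b`, so `f` is monotone on
`[0, ∞)`. For a metric `d`, monotonicity and subadditivity then give
`f (d x y) ≤ f (d x z + d z y) ≤ f (d x z) + f (d z y)`.
-/

lemma IsMetric.nonneg {X : Type*} {d : X → X → ℝ} (hd : IsMetric d) (x y : X) : 0 ≤ d x y := by
  have := hd.2.2 x x y
  rw [(hd.1 x x).2 rfl, hd.2.1 y x] at this
  linarith

lemma Amenable.map_eq_zero_iff {f : ℝ → ℝ} (hf : Amenable f) {x : ℝ} (hx : 0 ≤ x) :
    f x = 0 ↔ x = 0 := by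
  refine ⟨fun hfx => ?_, fun h => h ▸ hf.1⟩
  by_contra hne
  exact (hf.2 x (lt_of_le_of_ne hx (Ne.symm hne))).ne' hfx

theorem metricPreserving_of_amenable_of_monotoneOn {f : ℝ → ℝ} (hf : Amenable f)
    (hmono : MonotoneOn f (Set.Ici 0))
    (hsub : ∀ a b : ℝ, 0 ≤ a → 0 ≤ b → f (a + b) ≤ f a + f b) : MetricPreserving f := by
  intro X d hd
  refine ⟨fun x y => ?_, fun x y => by simp only [hd.2.1 x y], fun x y z => ?_⟩
  · rw [hf.map_eq_zero_iff (hd.nonneg x y), hd.1]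
  · calc f (d x y) ≤ f (d x z + d z y) :=
          hmono (hd.nonneg x y) (add_nonneg (hd.nonneg x z) (hd.nonneg z y)) (hd.2.2 x y z)
      _ ≤ f (d x z) + f (d z y) := hsub _ _ (hd.nonneg x z) (hd.nonneg z y)

def isoscelesDist (a b : ℝ) (i j : Fin 3) : ℝ :=
  if i = j then 0 else if i = 2 ∨ j = 2 then b else a

lemma isUltrametric_isoscelesDist {a b : ℝ} (ha : 0 < a) (hab : a ≤ b) :
    IsUltrametric (isoscelesDist a b) := by
  refine ⟨⟨fun x y => ?_, fun x y => ?_, fun x y z => ?_⟩, fun x y z => ?_⟩ <;>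
    fin_cases x <;> fin_cases y <;> (try fin_cases z) <;>
    simp [isoscelesDist] <;> linarith

namespace UltrametricPreserving

variable {f : ℝ → ℝ} (hf : UltrametricPreserving f)
include hf

lemma isMetric_comp_isoscelesDist {a b : ℝ} (ha : 0 < a) (hab : a ≤ b) :
    IsMetric (fun i j => f (isoscelesDist a b i j)) :=
  (hf _ _ (isUltrametric_isoscelesDist ha hab)).1

lemma amenable : Amenable f := by
  refine ⟨?_, fun b hb => ?_⟩
  · simpa [isoscelesDist] using ((hf.isMetric_comp_isoscelesDist one_pos le_rfl).1 0 0).2 rfl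
  · have hm := hf.isMetric_comp_isoscelesDist hb le_rfl
    have hne : f b ≠ 0 := by simpa [isoscelesDist] using (hm.1 0 2).not
    have hnn : 0 ≤ f b := by simpa [isoscelesDist] using hm.nonneg 0 2
    exact lt_of_le_of_ne hnn hne.symm

lemma monotoneOn : MonotoneOn f (Set.Ici 0) := by
  intro a ha b hb hab
  rcases (Set.mem_Ici.1 ha).eq_or_lt with rfl | ha
  · rw [hf.amenable.1]
    rcases (Set.mem_Ici.1 hb).eq_or_lt with rfl | hb
    · rw [hf.amenable.1]
    · exact (hf.amenable.2 b hb).le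
  · simpa [isoscelesDist] using (hf _ _ (isUltrametric_isoscelesDist ha hab)).2 0 1 2

end UltrametricPreserving

theorem stmt4 (f : ℝ → ℝ)
    (h1 : UltrametricPreserving f)
    (h2 : ∀ a b : ℝ, 0 ≤ a → 0 ≤ b → f (a + b) ≤ f a + f b) :
    MetricPreserving f :=
  metricPreserving_of_amenable_of_monotoneOn h1.amenable h1.monotoneOn h2
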